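/- arXiv:2305.04445 — 3 statements merged into one kernel-verified Lean document; each statement's English description precedes it below -/
import Mathlib

section
/- In a directed acyclic graph G with no v-structures (a moral DAG), if u → v is an arc of G, then u → w is an arc of G for every vertex w that is both a descendant of u and an ancestor of v. -/
/-!
Walk the path from `w` to `v` backwards. At each vertex `x` on it we know `u → x`, and the
predecessor `y` of `x` on the path also satisfies `y → x`; since there is no v-structure at `x`,
`u` and `y` are adjacent, and `y → u` would close a cycle with the path `u ⇝ y`.
-/

namespace Relation

variable {V : Type*} {A : V → V → Prop}

theorem arc_of_transGen_of_common_successor (hacyc : ∀ x, ¬ TransGen A x x)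
    (hmoral : ∀ a b c, a ≠ c → A a b → A c b → A a c ∨ A c a) {u w x : V}
    (hux : A u x) (hwx : A w x) (huw : TransGen A u w) : A u w := by
  have hne : u ≠ w := fun h => hacyc u (h ▸ huw)
  exact (hmoral u x w hne hux hwx).resolve_right fun hwu => hacyc u (huw.tail hwu)

end Relation

/-- In a moral DAG (acyclic arc relation with no v-structures): if `u → v` is an arc and
`w` is both a (strict) descendant of `u` and a (strict) ancestor of `v`, then `u → w` is
an arc. -/
theorem stmt12 {V : Type*} (A : V → V → Prop)
    (hacyc : ∀ x, ¬ Relation.TransGen A x x)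
    (hmoral : ∀ a b c, a ≠ c → A a b → A c b → (A a c ∨ A c a))
    (u v w : V) (huv : A u v)
    (hdes : Relation.TransGen A u w) (hanc : Relation.TransGen A w v) :
    A u w := by
  induction hanc using Relation.TransGen.head_induction_on with
  | single hwv =>
    exact Relation.arc_of_transGen_of_common_successor hacyc hmoral huv hwv hdes
  | head hwx _ ih =>
    exact Relation.arc_of_transGen_of_common_successor hacyc hmoral (ih (hdes.tail hwx)) hwx hdes
end

section
/- In a moral DAG on n ≥ 2 vertices whose underlying undirected skeleton is connected, there is a unique source node, i.e., exactly one vertex with no incoming arcs. -/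
/-- A moral DAG on `n ≥ 2` vertices whose skeleton is connected has a unique source node
(exactly one vertex with no incoming arcs). -/
theorem stmt13 {V : Type*} [Fintype V] (hcard : 2 ≤ Fintype.card V)
    (A : V → V → Prop)
    (hacyc : ∀ x, ¬ Relation.TransGen A x x)
    (hconn : ∀ u v : V, Relation.ReflTransGen (fun a b => A a b ∨ A b a) u v)
    (hmoral : ∀ a b c, a ≠ c → A a b → A c b → (A a c ∨ A c a)) :
    ∃! s : V, ∀ u, ¬ A u s := by
  -- key lemma: a source reaches backwards along incoming edges
  have key : ∀ s : V, (∀ u, ¬ A u s) → ∀ a, Relation.ReflTransGen A s a →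
      ∀ b, A b a → Relation.ReflTransGen A s b := by
    intro s hs a h
    induction h with
    | refl => intro b hb; exact absurd hb (hs b)
    | tail hsc hca ih =>
      rename_i c a'
      intro b hb
      by_cases hbc : b = c
      · subst hbc; exact hsc
      · rcases hmoral c a' b (fun h => hbc h.symm) hca hb with h1 | h2
        · exact hsc.tail h1
        · exact ih b h2
  -- a source reaches every vertex
  have reach : ∀ s : V, (∀ u, ¬ A u s) → ∀ v, Relation.ReflTransGen A s v := by
    intro s hs v
    have h := hconn s v
    induction h with
    | refl => exact Relation.ReflTransGen.refl
    | tail _ hab ih =>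
      rcases hab with h1 | h2
      · exact ih.tail h1
      · exact key s hs _ ih _ h2
  -- existence of a source
  haveI : IsTrans V (Relation.TransGen A) := ⟨fun _ _ _ => Relation.TransGen.trans⟩
  haveI : IsIrrefl V (Relation.TransGen A) := ⟨hacyc⟩
  have hwf : WellFounded (Relation.TransGen A) :=
    Finite.wellFounded_of_trans_of_irrefl _
  have hne : Nonempty V := Fintype.card_pos_iff.mp (by omega)
  obtain ⟨s, _, hmin⟩ := hwf.has_min Set.univ (Set.univ_nonempty)
  refine ⟨s, fun u hu => hmin u trivial (Relation.TransGen.single hu), ?_⟩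
  intro t ht
  by_contra hne'
  have h1 : Relation.ReflTransGen A s t := reach s (fun u hu => hmin u trivial (Relation.TransGen.single hu)) t
  have h2 : Relation.ReflTransGen A t s := reach t ht s
  -- from s to t nontrivially: last edge into t contradicts t source, unless s = t
  rcases (Relation.reflTransGen_iff_eq_or_transGen.mp h1) with rfl | htr
  · exact hne' rfl
  · rcases (Relation.TransGen.tail'_iff.mp htr) with ⟨c, _, hct⟩
    exact ht c hct
end

section
/- In a DAG, if u → v is a covered edge (Pa(u) = Pa(v) \ {u}), then reversing the edge to v → u yields a graph with the same skeleton and the same set of v-structures (hence the same Markov equivalence class), and the resulting graph is still acyclic. -/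
/-!
A directed cycle in the reversed graph either avoids the new arc `v → u`, and is then a cycle
of the original DAG, or passes through it, and then yields a path from `u` to `v` avoiding the
arc `u → v`. Such a path ends with an arc `x → v`, `x ≠ u`; coveredness makes `x` a parent of
`u`, which closes a cycle `u →* x → u` in the original DAG. For v-structures, a collider
`a → b ← c` with `a, c` non-adjacent cannot use the arc between `u` and `v`, since the other
endpoint would then be a parent of both `u` and `v`.
-/

namespace Relation

variable {V : Type*} {A : V → V → Prop} {u v : V}

variable (A u v) in
def removeArc (a b : V) : Prop := A a b ∧ ¬(a = u ∧ b = v)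

variable (A u v) in
def reverseArc (a b : V) : Prop := removeArc A u v a b ∨ (a = v ∧ b = u)

theorem reverseArc_or_reverseArc_iff (huv : A u v) (a b : V) :
    (reverseArc A u v a b ∨ reverseArc A u v b a) ↔ (A a b ∨ A b a) := by
  unfold reverseArc removeArc
  constructor
  · rintro ((⟨h, -⟩ | ⟨rfl, rfl⟩) | (⟨h, -⟩ | ⟨rfl, rfl⟩))
    exacts [Or.inl h, Or.inr huv, Or.inr h, Or.inl huv]
  · tauto

theorem transGen_reverseArc {x y : V} (h : TransGen (reverseArc A u v) x y) :
    TransGen (removeArc A u v) x y ∨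
      (ReflTransGen (removeArc A u v) x v ∧ ReflTransGen (removeArc A u v) u y) := by
  induction h with
  | single h =>
    rcases h with h | ⟨rfl, rfl⟩
    · exact Or.inl (.single h)
    · exact Or.inr ⟨.refl, .refl⟩
  | tail _ hby ih =>
    rcases hby with h | ⟨rfl, rfl⟩
    · exact ih.imp (·.tail h) (And.imp_right (·.tail h))
    · exact Or.inr ⟨ih.elim (·.to_reflTransGen) And.left, .refl⟩

theorem not_reflTransGen_removeArc (hacyc : ∀ x, ¬ TransGen A x x) (huv : A u v)
    (hcov : ∀ x, A x v → x ≠ u → A x u) : ¬ ReflTransGen (removeArc A u v) u v := by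
  intro h
  rcases reflTransGen_iff_eq_or_transGen.mp h with rfl | h
  · exact hacyc _ (.single huv)
  · obtain ⟨x, hux, hx, hxv⟩ := TransGen.tail'_iff.mp h
    have hxu : A x u := hcov x hx fun hxu => hxv ⟨hxu, rfl⟩
    exact hacyc u (TransGen.tail' (ReflTransGen.mono (fun _ _ => And.left) _ _ hux) hxu)

theorem not_transGen_reverseArc (hacyc : ∀ x, ¬ TransGen A x x)
    (hpath : ¬ ReflTransGen (removeArc A u v) u v) (x : V) :
    ¬ TransGen (reverseArc A u v) x x := by
  intro hx
  rcases transGen_reverseArc hx with h | ⟨hxv, hux⟩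
  · exact hacyc x (TransGen.mono (fun _ _ => And.left) _ _ h)
  · exact hpath (hux.trans hxv)

theorem collider_iff_reverseArc (hcov : ∀ x, A x u ↔ (A x v ∧ x ≠ u)) {a b c : V} (hac : a ≠ c)
    (hnadj : ¬(A a c ∨ A c a)) :
    (A a b ∧ A c b) ↔ (reverseArc A u v a b ∧ reverseArc A u v c b) := by
  unfold reverseArc removeArc
  constructor
  · rintro ⟨hab, hcb⟩
    refine ⟨.inl ⟨hab, ?_⟩, .inl ⟨hcb, ?_⟩⟩
    · rintro ⟨rfl, rfl⟩
      exact hnadj (.inr ((hcov c).mpr ⟨hcb, hac.symm⟩))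
    · rintro ⟨rfl, rfl⟩
      exact hnadj (.inl ((hcov a).mpr ⟨hab, hac⟩))
  · rintro ⟨⟨hab, -⟩ | ⟨rfl, rfl⟩, ⟨hcb, -⟩ | ⟨hcv, hbu⟩⟩
    · exact ⟨hab, hcb⟩
    · subst hcv hbu
      exact absurd (.inl ((hcov a).mp hab).1) hnadj
    · exact absurd (.inr ((hcov c).mp hcb).1) hnadj
    · exact absurd hcv.symm hac

end Relation

open Relation in
/-- Reversing a covered edge `u → v` (where `Pa(u) = Pa(v) \ {u}`) of a DAG yields a
directed graph with the same skeleton, which is still acyclic, and which has the same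
v-structures (arrow pairs into a common vertex from a non-adjacent pair). -/
theorem stmt18 {V : Type*} (A : V → V → Prop)
    (hacyc : ∀ x, ¬ Relation.TransGen A x x)
    (u v : V) (huv : A u v)
    (hcov : ∀ x, A x u ↔ (A x v ∧ x ≠ u)) :
    let A' : V → V → Prop := fun a b => (A a b ∧ ¬(a = u ∧ b = v)) ∨ (a = v ∧ b = u)
    (∀ a b, (A' a b ∨ A' b a) ↔ (A a b ∨ A b a)) ∧
    (∀ x, ¬ Relation.TransGen A' x x) ∧
    (∀ a b c, a ≠ c → ¬(A a c ∨ A c a) →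
      ((A a b ∧ A c b) ↔ (A' a b ∧ A' c b))) :=
  have hpath := not_reflTransGen_removeArc hacyc huv fun x hx hxu => (hcov x).mpr ⟨hx, hxu⟩
  ⟨reverseArc_or_reverseArc_iff huv, not_transGen_reverseArc hacyc hpath,
    fun _ _ _ => collider_iff_reverseArc hcov⟩
end
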